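/- arXiv:2302.02004 — 4 statements merged into one kernel-verified Lean document; each statement's English description precedes it below -/
import Mathlib

section
/- Let A : L²_π(X) → L²_π(X) be a compact self-adjoint bounded linear operator with eigenvalues (μ_j) and let r ∈ ℕ. Then for every Hilbert–Schmidt operator Ĝ : H → H of rank at most r and every eigenpair (λ̂_i, ψ̂_i) of Ĝ with λ̂_i ≠ 0 and S ψ̂_i ≠ 0, the distance from λ̂_i to its closest eigenvalue μ_{j(i)} of A satisfies |λ̂_i − μ_{j(i)}| ≤ η(ψ̂_i) · E(Ĝ). -/
open MeasureTheory ContinuousLinearMap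
open scoped RealInnerProductSpace ENNReal NNReal

noncomputable section

/-- The `j`-th singular value (`j ≥ 1`, in decreasing order) of a bounded operator,
defined via approximation numbers: `σ_j(B) = inf {‖B - F‖ : rank F < j}`
(for compact operators between Hilbert spaces this coincides with the usual
singular values). -/
def sval {H E : Type*} [NormedAddCommGroup H] [NormedAddCommGroup E]
    [NormedSpace ℝ H] [NormedSpace ℝ E] (B : H →L[ℝ] E) (j : ℕ) : ℝ :=
  sInf {t : ℝ | ∃ F : H →L[ℝ] E,
    Module.rank ℝ (LinearMap.range (F : H →ₗ[ℝ] E)) < (j : Cardinal) ∧ t = ‖B - F‖}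

/-- `Rt` is an `r`-truncated SVD of `B`: `Rt = B ∘ P` for an orthogonal projection `P`
of rank at most `r` achieving the optimal rank-`r` approximation error `σ_{r+1}(B)`. -/
def IsTruncSVD {H E : Type*} [NormedAddCommGroup H] [InnerProductSpace ℝ H] [CompleteSpace H]
    [NormedAddCommGroup E] [NormedSpace ℝ E]
    (B : H →L[ℝ] E) (r : ℕ) (Rt : H →L[ℝ] E) : Prop :=
  ∃ P : H →L[ℝ] H, IsSelfAdjoint P ∧ P ∘L P = P ∧
    Module.rank ℝ (LinearMap.range (P : H →ₗ[ℝ] H)) ≤ (r : Cardinal) ∧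
    Rt = B ∘L P ∧ ‖B - Rt‖ = sval B (r + 1)

/-- The rank-one operator `a ⊗ b : h ↦ ⟪a, h⟫ • b`. -/
def rankOne {H : Type*} [NormedAddCommGroup H] [InnerProductSpace ℝ H] (a b : H) :
    H →L[ℝ] H :=
  (innerSL ℝ a).smulRight b

/-- The empirical covariance operator `Ĉ = (1/n) ∑ᵢ φ(xᵢ) ⊗ φ(xᵢ)` of the dataset `D`. -/
def empCov {X H : Type*} [NormedAddCommGroup H] [InnerProductSpace ℝ H] (φ : X → H)
    (n : ℕ) (D : Fin n → X × X) : H →L[ℝ] H :=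
  (n : ℝ)⁻¹ • ∑ i, rankOne (φ (D i).1) (φ (D i).1)

/-- The empirical cross-covariance operator `Ĉ_XY = (1/n) ∑ᵢ φ(xᵢ) ⊗ φ(yᵢ)`. -/
def empCrossCov {X H : Type*} [NormedAddCommGroup H] [InnerProductSpace ℝ H] (φ : X → H)
    (n : ℕ) (D : Fin n → X × X) : H →L[ℝ] H :=
  (n : ℝ)⁻¹ • ∑ i, rankOne (φ (D i).1) (φ (D i).2)

/-!
Since `(A S - S G) ψ = A (S ψ) - lam • S ψ`, it suffices to show `‖A f - lam • f‖ ≥ d ‖f‖` for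
all `f`, where `d` is the distance from `lam` to the eigenvalues of `A`. On a finite sum of
eigenvectors this is Pythagoras, the eigenspaces being orthogonal; by the spectral theorem for
compact self-adjoint operators such sums are dense, and the inequality is closed.
-/

section EigenvalueGap

open Module End

variable {E : Type*} [NormedAddCommGroup E] [InnerProductSpace ℝ E]

theorem OrthogonalFamily.mul_norm_le_norm_map_of_mem_iSup {ι : Type*} {V : ι → Submodule ℝ E}
    (hV : OrthogonalFamily ℝ (fun i => V i) fun i => (V i).subtypeₗᵢ) (F : E →ₗ[ℝ] E)
    (hFV : ∀ i, ∀ v ∈ V i, F v ∈ V i) {d : ℝ} (hd : 0 ≤ d)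
    (hFd : ∀ i, ∀ v ∈ V i, d * ‖v‖ ≤ ‖F v‖) {x : E} (hx : x ∈ ⨆ i, V i) :
    d * ‖x‖ ≤ ‖F x‖ := by
  obtain ⟨f, hf, rfl⟩ := (Submodule.mem_iSup_iff_exists_finsupp V x).mp hx
  have hnorm : ‖f.sum fun _ v => v‖ ^ 2 = ∑ i ∈ f.support, ‖f i‖ ^ 2 :=
    hV.norm_sum (fun i => ⟨f i, hf i⟩) f.support
  have hFnorm : ‖F (f.sum fun _ v => v)‖ ^ 2 = ∑ i ∈ f.support, ‖F (f i)‖ ^ 2 := by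
    rw [Finsupp.sum, map_sum]
    exact hV.norm_sum (fun i => ⟨F (f i), hFV i _ (hf i)⟩) f.support
  refine (pow_le_pow_iff_left₀ (by positivity) (norm_nonneg _) two_ne_zero).mp ?_
  rw [mul_pow, hnorm, hFnorm, Finset.mul_sum]
  refine Finset.sum_le_sum fun i _ => ?_
  rw [← mul_pow]
  exact pow_le_pow_left₀ (by positivity) (hFd i _ (hf i)) 2

theorem LinearMap.IsSymmetric.mul_norm_le_norm_sub_smul_of_mem_iSup_eigenspaces
    {T : E →ₗ[ℝ] E} (hT : T.IsSymmetric) {lam d : ℝ} (hd : 0 ≤ d)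
    (hgap : ∀ μ, HasEigenvalue T μ → d ≤ |lam - μ|) {x : E}
    (hx : x ∈ ⨆ μ, eigenspace T μ) : d * ‖x‖ ≤ ‖T x - lam • x‖ := by
  have hshift : ∀ μ, ∀ v ∈ eigenspace T μ, (T - lam • 1) v = (μ - lam) • v := fun μ v hv => by
    rw [LinearMap.sub_apply, mem_eigenspace_iff.mp hv, LinearMap.smul_apply, one_apply, sub_smul]
  refine hT.orthogonalFamily_eigenspaces.mul_norm_le_norm_map_of_mem_iSup (T - lam • 1)
    (fun μ v hv => hshift μ v hv ▸ (eigenspace T μ).smul_mem _ hv) hd (fun μ v hv => ?_) hx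
  rcases eq_or_ne v 0 with rfl | hv0
  · simp
  calc d * ‖v‖ ≤ |lam - μ| * ‖v‖ := by
        gcongr; exact hgap μ (hasEigenvalue_of_hasEigenvector ⟨hv, hv0⟩)
    _ = ‖(T - lam • 1) v‖ := by rw [hshift μ v hv, norm_smul, Real.norm_eq_abs, abs_sub_comm]

theorem IsSelfAdjoint.mul_norm_le_norm_sub_smul_of_isCompactOperator [CompleteSpace E]
    {T : E →L[ℝ] E} (hT : IsSelfAdjoint T) (hTc : IsCompactOperator T) {lam d : ℝ}
    (hd : 0 ≤ d) (hgap : ∀ μ, HasEigenvalue (T : E →ₗ[ℝ] E) μ → d ≤ |lam - μ|) (x : E) :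
    d * ‖x‖ ≤ ‖T x - lam • x‖ := by
  have hdense : Dense ((⨆ μ, eigenspace (T : E →ₗ[ℝ] E) μ : Submodule ℝ E) : Set E) :=
    Submodule.dense_iff_topologicalClosure_eq_top.mpr <|
      Submodule.topologicalClosure_eq_top_iff.mpr <|
        ContinuousLinearMap.orthogonalComplement_iSup_eigenspaces_eq_bot hTc hT.isSymmetric
  refine hdense.induction (fun y hy => ?_) ?_ x
  · exact hT.isSymmetric.mul_norm_le_norm_sub_smul_of_mem_iSup_eigenspaces hd hgap hy
  · exact isClosed_le (by fun_prop) (by fun_prop)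

end EigenvalueGap

theorem eigenvalue_error_le_distortion_mul_opNormError_general
    {X : Type*} [MeasurableSpace X] (π : Measure X)
    {H : Type*} [NormedAddCommGroup H] [InnerProductSpace ℝ H]
    -- the Koopman operator: compact and self-adjoint on L²_π(X)
    (A : Lp ℝ 2 π →L[ℝ] Lp ℝ 2 π)
    (hAc : IsCompactOperator (A : Lp ℝ 2 π → Lp ℝ 2 π)) (hAsa : IsSelfAdjoint A)
    -- the injection S : H → L²_π(X)
    (S : H →L[ℝ] Lp ℝ 2 π)
    (G : H →L[ℝ] H)
    -- an eigenpair of G with nonzero eigenvalue and S ψ ≠ 0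
    (lam : ℝ) (ψ : H) (heig : G ψ = lam • ψ) (hSψ : S ψ ≠ 0)
    -- μ is the eigenvalue of A closest to lam
    (μ : ℝ)
    (hclosest : ∀ μ' : ℝ, (∃ f : Lp ℝ 2 π, f ≠ 0 ∧ A f = μ' • f) → |lam - μ| ≤ |lam - μ'|) :
    |lam - μ| ≤ (‖ψ‖ / ‖S ψ‖) * ‖A ∘L S - S ∘L G‖ := by
  have hgap : |lam - μ| * ‖S ψ‖ ≤ ‖A (S ψ) - lam • S ψ‖ :=
    hAsa.mul_norm_le_norm_sub_smul_of_isCompactOperator hAc (abs_nonneg _)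
      (fun μ' hμ' => by
        obtain ⟨f, hf⟩ := hμ'.exists_hasEigenvector
        exact hclosest μ' ⟨f, hf.2, hf.apply_eq_smul⟩) (S ψ)
  have hres : A (S ψ) - lam • S ψ = (A ∘L S - S ∘L G) ψ := by
    simp only [sub_apply, comp_apply, heig, map_smul]
  rw [div_mul_eq_mul_div, le_div_iff₀ (norm_pos_iff.mpr hSψ)]
  calc |lam - μ| * ‖S ψ‖ ≤ ‖(A ∘L S - S ∘L G) ψ‖ := hres ▸ hgap
    _ ≤ ‖A ∘L S - S ∘L G‖ * ‖ψ‖ := le_opNorm _ _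
    _ = ‖ψ‖ * ‖A ∘L S - S ∘L G‖ := mul_comm _ _

/-- For a compact self-adjoint Koopman operator `A` on `L²_π(X)`,
any rank-`r` (Hilbert–Schmidt) estimator `G : H → H` and any eigenpair `(lam, ψ)` of `G`
with `lam ≠ 0` and `S ψ ≠ 0`, the distance of `lam` to the closest eigenvalue `μ` of `A`
is bounded by the metric distortion `η(ψ) = ‖ψ‖/‖S ψ‖` times the operator norm error
`E(G) = ‖A ∘ S - S ∘ G‖`. -/
theorem eigenvalue_error_le_distortion_mul_opNormError
    {X : Type*} [MeasurableSpace X] (π : Measure X) [IsProbabilityMeasure π]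
    {H : Type*} [NormedAddCommGroup H] [InnerProductSpace ℝ H] [CompleteSpace H]
    [TopologicalSpace.SeparableSpace H]
    -- the Koopman operator: compact and self-adjoint on L²_π(X)
    (A : Lp ℝ 2 π →L[ℝ] Lp ℝ 2 π)
    (hAc : IsCompactOperator (A : Lp ℝ 2 π → Lp ℝ 2 π)) (hAsa : IsSelfAdjoint A)
    -- the injection S : H → L²_π(X)
    (S : H →L[ℝ] Lp ℝ 2 π) (hSinj : Function.Injective S)
    -- a rank ≤ r estimator
    (r : ℕ) (G : H →L[ℝ] H)
    (hrank : Module.rank ℝ (LinearMap.range (G : H →ₗ[ℝ] H)) ≤ (r : Cardinal))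
    -- an eigenpair of G with nonzero eigenvalue and S ψ ≠ 0
    (lam : ℝ) (ψ : H) (heig : G ψ = lam • ψ) (hlam : lam ≠ 0) (hSψ : S ψ ≠ 0)
    -- μ is the eigenvalue of A closest to lam
    (μ : ℝ) (hμ : ∃ f : Lp ℝ 2 π, f ≠ 0 ∧ A f = μ • f)
    (hclosest : ∀ μ' : ℝ, (∃ f : Lp ℝ 2 π, f ≠ 0 ∧ A f = μ' • f) → |lam - μ| ≤ |lam - μ'|) :
    |lam - μ| ≤ (‖ψ‖ / ‖S ψ‖) * ‖A ∘L S - S ∘L G‖ :=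
  eigenvalue_error_le_distortion_mul_opNormError_general π A hAc hAsa S G lam ψ heig hSψ μ hclosest
end
end

section
/- Let Ĝ : H → H be a Hilbert–Schmidt operator of rank at most r, let (λ̂_i, ψ̂_i) be an eigenpair of Ĝ with λ̂_i ≠ 0 and S ψ̂_i ≠ 0, and let ξ̂_i be a corresponding left eigenfunction (Ĝ* ξ̂_i = λ̂_i ξ̂_i) with ⟨ψ̂_i, ξ̂_i⟩ ≠ 0. Then the metric distortion of ψ̂_i is bounded as 1/√‖C‖ ≤ η(ψ̂_i) ≤ min(|λ̂_i| κ(λ̂_i), ‖Ĝ‖) / σ⁺_min(S Ĝ), where κ(λ̂_i) := ‖ξ̂_i‖ ‖ψ̂_i‖ / |⟨ψ̂_i, ξ̂_i⟩| is the condition number of the eigenvalue λ̂_i and σ⁺_min(S Ĝ) denotes the smallest nonzero singular value of S Ĝ. -/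
open MeasureTheory ContinuousLinearMap
open scoped RealInnerProductSpace ENNReal NNReal

noncomputable section

/-! The lower bound is `‖S ψ‖ ≤ ‖S‖ ‖ψ‖` together with `‖S* S‖ = ‖S‖²`.

For the upper bound write `ψ = k + w` with `k ∈ ker (S G) = ker G` and `w ⊥ ker (S G)`.
Then `G w = λ ψ`, so `σ ‖w‖ ≤ ‖S G w‖ = |λ| ‖S ψ‖`, where `σ = σ⁺_min(S G) > 0` because `S G`
has finite rank and is injective on `(ker S G)ᗮ`. It remains to bound `‖w‖` from below:
`|λ| ‖ψ‖ = ‖G w‖ ≤ ‖G‖ ‖w‖`, and a left eigenvector `ξ` for `λ ≠ 0` lies in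
`range G* ⊆ (ker G)ᗮ`, so `|⟪ψ, ξ⟫| = |⟪w, ξ⟫| ≤ ‖w‖ ‖ξ‖`. -/

section SingularValue

variable {E F : Type*} [NormedAddCommGroup E] [InnerProductSpace ℝ E]
  [NormedAddCommGroup F] [NormedSpace ℝ F]

/-- `σ⁺_min(T)`. When `(ker T)ᗮ = 0` the set is empty and the value is the junk `sInf ∅ = 0`. -/
def minNonzeroSingularValue (T : E →L[ℝ] F) : ℝ :=
  sInf {t : ℝ | ∃ g : E,
    g ∈ (LinearMap.ker (T : E →ₗ[ℝ] F))ᗮ ∧ g ≠ 0 ∧ t = ‖T g‖ / ‖g‖}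

theorem minNonzeroSingularValue_mul_norm_le {T : E →L[ℝ] F} {g : E}
    (hg : g ∈ (LinearMap.ker (T : E →ₗ[ℝ] F))ᗮ) :
    minNonzeroSingularValue T * ‖g‖ ≤ ‖T g‖ := by
  rcases eq_or_ne g 0 with rfl | hg0
  · simp
  have hle : minNonzeroSingularValue T ≤ ‖T g‖ / ‖g‖ :=
    csInf_le ⟨0, by rintro t ⟨g, -, -, rfl⟩; positivity⟩ ⟨g, hg, hg0, rfl⟩
  exact (le_div_iff₀ (norm_pos_iff.mpr hg0)).mp hle

theorem exists_pos_mul_norm_le_of_mem_orthogonal_ker (T : E →L[ℝ] F)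
    [FiniteDimensional ℝ (LinearMap.range (T : E →ₗ[ℝ] F))] :
    ∃ c > 0, ∀ g ∈ (LinearMap.ker (T : E →ₗ[ℝ] F))ᗮ, c * ‖g‖ ≤ ‖T g‖ := by
  set K := LinearMap.ker (T : E →ₗ[ℝ] F)
  set f : Kᗮ →ₗ[ℝ] LinearMap.range (T : E →ₗ[ℝ] F) :=
    (T : E →ₗ[ℝ] F).rangeRestrict.domRestrict Kᗮ
  have hfker : LinearMap.ker f = ⊥ := by
    rw [LinearMap.ker_eq_bot']
    intro g hg
    have hgK : (g : E) ∈ K := by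
      simpa [f, K, Subtype.ext_iff] using hg
    exact Subtype.ext ((Submodule.inf_orthogonal_eq_bot K).le ⟨hgK, g.2⟩)
  have : FiniteDimensional ℝ Kᗮ := Module.Finite.of_injective f (LinearMap.ker_eq_bot.mp hfker)
  obtain ⟨c, hc, hanti⟩ := f.exists_antilipschitzWith hfker
  refine ⟨(c : ℝ)⁻¹, by positivity, fun g hg => ?_⟩
  have hg := hanti.le_mul_dist ⟨g, hg⟩ 0
  simp only [dist_zero_right, map_zero] at hg
  rw [inv_mul_le_iff₀ (by exact_mod_cast hc)]
  simpa [f] using hg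

theorem minNonzeroSingularValue_pos {T : E →L[ℝ] F}
    [FiniteDimensional ℝ (LinearMap.range (T : E →ₗ[ℝ] F))]
    (h : ∃ g ∈ (LinearMap.ker (T : E →ₗ[ℝ] F))ᗮ, g ≠ 0) :
    0 < minNonzeroSingularValue T := by
  obtain ⟨c, hc, hcT⟩ := exists_pos_mul_norm_le_of_mem_orthogonal_ker T
  obtain ⟨g, hg, hg0⟩ := h
  refine hc.trans_le (le_csInf ⟨_, g, hg, hg0, rfl⟩ ?_)
  rintro t ⟨g, hg, hg0, rfl⟩
  exact (le_div_iff₀ (norm_pos_iff.mpr hg0)).mpr (hcT g hg)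

end SingularValue

theorem one_div_opNorm_le_norm_div_norm_apply {𝕜 E F : Type*} [NontriviallyNormedField 𝕜]
    [SeminormedAddCommGroup E] [NormedAddCommGroup F] [NormedSpace 𝕜 E] [NormedSpace 𝕜 F]
    (f : E →L[𝕜] F) {x : E} (hx : f x ≠ 0) :
    1 / ‖f‖ ≤ ‖x‖ / ‖f x‖ := by
  have hfx : 0 < ‖f x‖ := norm_pos_iff.mpr hx
  have hf : 0 < ‖f‖ := (norm_nonneg f).lt_of_ne' fun hf => by simpa [hf, hx] using f.le_opNorm x
  rw [div_le_div_iff₀ hf hfx, one_mul]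
  exact (f.le_opNorm x).trans_eq (mul_comm _ _)

section Hilbert

variable {E : Type*} [NormedAddCommGroup E] [InnerProductSpace ℝ E] [CompleteSpace E]

theorem sqrt_norm_adjoint_comp_self {F : Type*} [NormedAddCommGroup F] [InnerProductSpace ℝ F]
    [CompleteSpace F] (S : E →L[ℝ] F) : Real.sqrt ‖adjoint S ∘L S‖ = ‖S‖ := by
  rw [norm_adjoint_comp_self, Real.sqrt_mul_self (norm_nonneg S)]

theorem exists_mem_orthogonal_ker_sub_mem_ker {F : Type*} [NormedAddCommGroup F]
    [NormedSpace ℝ F] (T : E →L[ℝ] F) (x : E) :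
    ∃ w ∈ (LinearMap.ker (T : E →ₗ[ℝ] F))ᗮ, x - w ∈ LinearMap.ker (T : E →ₗ[ℝ] F) := by
  set K := LinearMap.ker (T : E →ₗ[ℝ] F)
  have : CompleteSpace K := T.isClosed_ker.completeSpace_coe
  exact ⟨x - K.starProjection x, K.sub_starProjection_mem_orthogonal x,
    by rw [sub_sub_cancel]; exact K.starProjection_apply_mem x⟩

theorem inner_eq_zero_of_apply_eq_zero_of_adjoint_apply_eq_smul {G : E →L[ℝ] E} {lam : ℝ}
    {k ξ : E} (hk : G k = 0) (hξ : adjoint G ξ = lam • ξ) (hlam : lam ≠ 0) : ⟪k, ξ⟫ = 0 := by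
  have : lam * ⟪k, ξ⟫ = 0 := by
    rw [← real_inner_smul_right, ← hξ, adjoint_inner_right, hk, inner_zero_left]
  exact (mul_eq_zero.mp this).resolve_left hlam

theorem norm_div_norm_le_min_div_minNonzeroSingularValue {F : Type*} [NormedAddCommGroup F]
    [NormedSpace ℝ F] {S : E →L[ℝ] F} (hS : Function.Injective S) {G : E →L[ℝ] E}
    [FiniteDimensional ℝ (LinearMap.range (G : E →ₗ[ℝ] E))]
    {lam : ℝ} {ψ ξ : E} (hψ : G ψ = lam • ψ) (hlam : lam ≠ 0) (hSψ : S ψ ≠ 0)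
    (hξ : adjoint G ξ = lam • ξ) (hψξ : ⟪ψ, ξ⟫ ≠ 0) :
    ‖ψ‖ / ‖S ψ‖ ≤
      min (|lam| * (‖ξ‖ * ‖ψ‖ / |⟪ψ, ξ⟫|)) ‖G‖ / minNonzeroSingularValue (S ∘L G) := by
  have : FiniteDimensional ℝ (LinearMap.range ((S ∘L G : E →L[ℝ] F) : E →ₗ[ℝ] F)) := by
    rw [toLinearMap_comp, LinearMap.range_comp]
    infer_instance
  obtain ⟨w, hwK, hψw⟩ := exists_mem_orthogonal_ker_sub_mem_ker (S ∘L G) ψ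
  have hGψw : G (ψ - w) = 0 := hS (by simpa using hψw)
  have hGw : G w = lam • ψ := by rw [← hψ, eq_comm, ← sub_eq_zero, ← map_sub, hGψw]
  have hSGw : ‖(S ∘L G) w‖ = |lam| * ‖S ψ‖ := by simp [hGw, norm_smul]
  have hw0 : w ≠ 0 := by
    rintro rfl
    simp [hlam, hSψ] at hSGw
  have hσ := minNonzeroSingularValue_pos ⟨w, hwK, hw0⟩
  have hσw := (minNonzeroSingularValue_mul_norm_le hwK).trans_eq hSGw
  have hinner : |⟪ψ, ξ⟫| ≤ ‖w‖ * ‖ξ‖ := by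
    have h := inner_eq_zero_of_apply_eq_zero_of_adjoint_apply_eq_smul hGψw hξ hlam
    rw [inner_sub_left, sub_eq_zero] at h
    exact h ▸ abs_real_inner_le_norm w ξ
  have hw : 0 < ‖w‖ := norm_pos_iff.mpr hw0
  rw [le_div_iff₀ hσ]
  calc ‖ψ‖ / ‖S ψ‖ * minNonzeroSingularValue (S ∘L G) ≤ |lam| * ‖ψ‖ / ‖w‖ := by
        rw [div_mul_eq_mul_div, div_le_div_iff₀ (norm_pos_iff.mpr hSψ) hw]
        nlinarith [mul_le_mul_of_nonneg_left hσw (norm_nonneg ψ)]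
    _ ≤ min (|lam| * (‖ξ‖ * ‖ψ‖ / |⟪ψ, ξ⟫|)) ‖G‖ := by
        refine le_min ?_ (div_le_of_le_mul₀ hw.le (norm_nonneg G) ?_)
        · rw [mul_div_assoc]
          refine mul_le_mul_of_nonneg_left ?_ (abs_nonneg lam)
          rw [div_le_div_iff₀ hw (abs_pos.mpr hψξ)]
          nlinarith [mul_le_mul_of_nonneg_left hinner (norm_nonneg ψ)]
        · calc |lam| * ‖ψ‖ = ‖G w‖ := by rw [hGw, norm_smul, Real.norm_eq_abs]
            _ ≤ ‖G‖ * ‖w‖ := G.le_opNorm w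

end Hilbert

theorem metric_distortion_bounds_general
    {X : Type*} [MeasurableSpace X] (π : Measure X)
    {H : Type*} [NormedAddCommGroup H] [InnerProductSpace ℝ H] [CompleteSpace H]
    -- the injection S : H → L²_π(X)
    (S : H →L[ℝ] Lp ℝ 2 π) (hSinj : Function.Injective S)
    -- a rank ≤ r estimator
    (r : ℕ) (G : H →L[ℝ] H)
    (hrank : Module.rank ℝ (LinearMap.range (G : H →ₗ[ℝ] H)) ≤ (r : Cardinal))
    -- an eigenpair of G with nonzero eigenvalue and S ψ ≠ 0
    (lam : ℝ) (ψ : H) (heig : G ψ = lam • ψ) (hlam : lam ≠ 0) (hSψ : S ψ ≠ 0)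
    -- a corresponding left eigenfunction
    (ξ : H) (hleft : adjoint G ξ = lam • ξ) (hξψ : ⟪ψ, ξ⟫ ≠ 0) :
    1 / Real.sqrt ‖adjoint S ∘L S‖ ≤ ‖ψ‖ / ‖S ψ‖ ∧
    ‖ψ‖ / ‖S ψ‖ ≤
      min (|lam| * (‖ξ‖ * ‖ψ‖ / |⟪ψ, ξ⟫|)) ‖G‖ /
        sInf {t : ℝ | ∃ g : H,
          g ∈ (LinearMap.ker ((S ∘L G : H →L[ℝ] Lp ℝ 2 π) : H →ₗ[ℝ] Lp ℝ 2 π))ᗮ ∧ g ≠ 0 ∧ t = ‖(S ∘L G) g‖ / ‖g‖} := by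
  have : FiniteDimensional ℝ (LinearMap.range (G : H →ₗ[ℝ] H)) :=
    Module.rank_lt_aleph0_iff.mp (hrank.trans_lt Cardinal.natCast_lt_aleph0)
  refine ⟨?_, norm_div_norm_le_min_div_minNonzeroSingularValue hSinj heig hlam hSψ hleft hξψ⟩
  rw [sqrt_norm_adjoint_comp_self]
  exact one_div_opNorm_le_norm_div_norm_apply S hSψ

/-- Tight bounds on the metric distortion `η(ψ) = ‖ψ‖/‖S ψ‖` of an
eigenfunction `ψ` of a rank ≤ r estimator `G`:
`1/√‖C‖ ≤ η(ψ) ≤ min(|lam| κ(lam), ‖G‖) / σ⁺_min(S G)`, where `C = S*S`,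
`κ(lam) = ‖ξ‖‖ψ‖/|⟪ψ, ξ⟫|` for a left eigenfunction `ξ`, and `σ⁺_min(S G)` is the
smallest nonzero singular value of `S ∘ G`, i.e. the infimum of `‖(S ∘ G) g‖/‖g‖`
over nonzero `g` orthogonal to the kernel of `S ∘ G`. -/
theorem metric_distortion_bounds
    {X : Type*} [MeasurableSpace X] (π : Measure X) [IsProbabilityMeasure π]
    {H : Type*} [NormedAddCommGroup H] [InnerProductSpace ℝ H] [CompleteSpace H]
    [TopologicalSpace.SeparableSpace H]
    -- the injection S : H → L²_π(X)
    (S : H →L[ℝ] Lp ℝ 2 π) (hSinj : Function.Injective S)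
    -- a rank ≤ r estimator
    (r : ℕ) (G : H →L[ℝ] H)
    (hrank : Module.rank ℝ (LinearMap.range (G : H →ₗ[ℝ] H)) ≤ (r : Cardinal))
    -- an eigenpair of G with nonzero eigenvalue and S ψ ≠ 0
    (lam : ℝ) (ψ : H) (heig : G ψ = lam • ψ) (hlam : lam ≠ 0) (hSψ : S ψ ≠ 0)
    -- a corresponding left eigenfunction
    (ξ : H) (hleft : adjoint G ξ = lam • ξ) (hξψ : ⟪ψ, ξ⟫ ≠ 0) :
    1 / Real.sqrt ‖adjoint S ∘L S‖ ≤ ‖ψ‖ / ‖S ψ‖ ∧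
    ‖ψ‖ / ‖S ψ‖ ≤
      min (|lam| * (‖ξ‖ * ‖ψ‖ / |⟪ψ, ξ⟫|)) ‖G‖ /
        sInf {t : ℝ | ∃ g : H,
          g ∈ (LinearMap.ker ((S ∘L G : H →L[ℝ] Lp ℝ 2 π) : H →ₗ[ℝ] Lp ℝ 2 π))ᗮ ∧ g ≠ 0 ∧ t = ‖(S ∘L G) g‖ / ‖g‖} :=
  metric_distortion_bounds_general π S hSinj r G hrank lam ψ heig hlam hSψ ξ hleft hξψ
end
end

section
/- Let Ĝ : H → H be a Hilbert–Schmidt operator of rank at most r and (λ̂_i, ψ̂_i) an eigenpair of Ĝ with λ̂_i ≠ 0, S ψ̂_i ≠ 0 and ⟨Ĉ ψ̂_i, ψ̂_i⟩ > 0. Then the empirical metric distortion η̂_i := ‖ψ̂_i‖ / √⟨Ĉ ψ̂_i, ψ̂_i⟩ satisfies |η̂_i − η(ψ̂_i)| ≤ min(η(ψ̂_i), η̂_i) · η(ψ̂_i) · η̂_i · ‖Ĉ − C‖. -/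
open MeasureTheory ContinuousLinearMap
open scoped RealInnerProductSpace ENNReal NNReal

noncomputable section

/-! Write `a = ‖S ψ‖` and `b = √⟪Ĉ ψ, ψ⟫`. Since `a² = ⟪C ψ, ψ⟫` and `b² = ⟪Ĉ ψ, ψ⟫`, we have
`|b² - a²| ≤ ‖Ĉ - C‖ ‖ψ‖²`, and `1/b - 1/a = (a² - b²) / (a b (a + b))` with
`a + b ≥ max a b` converts this into the bound on the distortions. -/

theorem abs_inner_map_self_sub_le {E : Type*} [NormedAddCommGroup E] [InnerProductSpace ℝ E]
    (A B : E →L[ℝ] E) (x : E) : |⟪A x, x⟫ - ⟪B x, x⟫| ≤ ‖A - B‖ * ‖x‖ ^ 2 := by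
  rw [← inner_sub_left, ← sub_apply]
  calc |⟪(A - B) x, x⟫| ≤ ‖(A - B) x‖ * ‖x‖ := abs_real_inner_le_norm _ _
    _ ≤ ‖A - B‖ * ‖x‖ * ‖x‖ := by gcongr; exact (A - B).le_opNorm x
    _ = ‖A - B‖ * ‖x‖ ^ 2 := by ring

theorem abs_div_sub_div_le_min_mul {a b n ε : ℝ} (ha : 0 < a) (hb : 0 < b) (hn : 0 ≤ n)
    (hε : 0 ≤ ε) (h : |b ^ 2 - a ^ 2| ≤ ε * n ^ 2) :
    |n / b - n / a| ≤ min (n / a) (n / b) * (n / a) * (n / b) * ε := by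
  have hdiff : n / b - n / a = n * (a ^ 2 - b ^ 2) / (a * b * (a + b)) := by
    field_simp; ring
  calc |n / b - n / a| = n * |b ^ 2 - a ^ 2| / (a * b * (a + b)) := by
        rw [hdiff, abs_div, abs_mul, abs_of_nonneg hn,
          abs_of_pos (show 0 < a * b * (a + b) by positivity), abs_sub_comm]
    _ ≤ n * (ε * n ^ 2) / (a * b * (a + b)) := by gcongr
    _ = n / (a + b) * (n / a) * (n / b) * ε := by field_simp
    _ ≤ min (n / a) (n / b) * (n / a) * (n / b) * ε := by
        gcongr
        exact le_min (by gcongr; linarith) (by gcongr; linarith)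

theorem empirical_metric_distortion_concentration_general
    {X : Type*} [MeasurableSpace X] (π : Measure X)
    {H : Type*} [NormedAddCommGroup H] [InnerProductSpace ℝ H] [CompleteSpace H]
    -- the injection S : H → L²_π(X)
    (S : H →L[ℝ] Lp ℝ 2 π)
    (ψ : H) (hSψ : S ψ ≠ 0)
    -- a positive self-adjoint operator (the empirical covariance)
    (Chat : H →L[ℝ] H)
    (hpos : 0 < ⟪Chat ψ, ψ⟫) :
    |‖ψ‖ / Real.sqrt ⟪Chat ψ, ψ⟫ - ‖ψ‖ / ‖S ψ‖| ≤
      min (‖ψ‖ / ‖S ψ‖) (‖ψ‖ / Real.sqrt ⟪Chat ψ, ψ⟫) * (‖ψ‖ / ‖S ψ‖) *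
        (‖ψ‖ / Real.sqrt ⟪Chat ψ, ψ⟫) * ‖Chat - adjoint S ∘L S‖ := by
  have hquad : |Real.sqrt ⟪Chat ψ, ψ⟫ ^ 2 - ‖S ψ‖ ^ 2| ≤
      ‖Chat - adjoint S ∘L S‖ * ‖ψ‖ ^ 2 := by
    rw [Real.sq_sqrt hpos.le, apply_norm_sq_eq_inner_adjoint_left]
    exact abs_inner_map_self_sub_le _ _ ψ
  exact abs_div_sub_div_le_min_mul (norm_pos_iff.2 hSψ) (Real.sqrt_pos.2 hpos) (norm_nonneg ψ)
    (norm_nonneg _) hquad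

/-- Concentration of the empirical metric distortion
`η̂ = ‖ψ‖/√⟪Ĉ ψ, ψ⟫` around the true metric distortion `η(ψ) = ‖ψ‖/‖S ψ‖`:
`|η̂ - η(ψ)| ≤ min(η(ψ), η̂) · η(ψ) · η̂ · ‖Ĉ - C‖`, where `C = S*S` and `Ĉ` is any
positive self-adjoint operator (e.g. the empirical covariance). -/
theorem empirical_metric_distortion_concentration
    {X : Type*} [MeasurableSpace X] (π : Measure X) [IsProbabilityMeasure π]
    {H : Type*} [NormedAddCommGroup H] [InnerProductSpace ℝ H] [CompleteSpace H]
    [TopologicalSpace.SeparableSpace H]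
    -- the injection S : H → L²_π(X)
    (S : H →L[ℝ] Lp ℝ 2 π) (hSinj : Function.Injective S)
    -- a rank ≤ r estimator
    (r : ℕ) (G : H →L[ℝ] H)
    (hrank : Module.rank ℝ (LinearMap.range (G : H →ₗ[ℝ] H)) ≤ (r : Cardinal))
    -- an eigenpair of G with nonzero eigenvalue and S ψ ≠ 0
    (lam : ℝ) (ψ : H) (heig : G ψ = lam • ψ) (hlam : lam ≠ 0) (hSψ : S ψ ≠ 0)
    -- a positive self-adjoint operator (the empirical covariance)
    (Chat : H →L[ℝ] H) (hChat : Chat.IsPositive)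
    (hpos : 0 < ⟪Chat ψ, ψ⟫) :
    |‖ψ‖ / Real.sqrt ⟪Chat ψ, ψ⟫ - ‖ψ‖ / ‖S ψ‖| ≤
      min (‖ψ‖ / ‖S ψ‖) (‖ψ‖ / Real.sqrt ⟪Chat ψ, ψ⟫) * (‖ψ‖ / ‖S ψ‖) *
        (‖ψ‖ / Real.sqrt ⟪Chat ψ, ψ⟫) * ‖Chat - adjoint S ∘L S‖ :=
  empirical_metric_distortion_concentration_general π S ψ hSψ Chat hpos
end
end

section
/- Let W_γ := C_γ^{-1} T for γ > 0 and let P_H : L²_π(X) → L²_π(X) be the orthogonal projection onto the closure of range(S). If assumptions (BK), (SD) with β ∈ (0,1] and (RC) with parameter α hold, then: ‖W_γ‖ ≤ a c_H^{(α−1)/2} when α ∈ [1,2]; ‖W_γ‖ ≤ a γ^{(α−1)/2} when α ∈ (0,1]; and ‖A S − S W_γ‖ ≤ a γ^{α/2} + ‖(I − P_H) A S‖. -/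
/-! Diagonalize `C = S* S` in the eigenbasis `hv` (eigenvalues `σ_j²`). As `C + γ` is invertible,
`W* = T* (C + γ)⁻¹`, so (RC) bounds `‖W* g‖²` by `a² ∑ σ_j^{2(1+α)} (σ_j² + γ)⁻² ⟪hv_j, g⟫²`.
The weights are controlled by `x^p y^q ≤ (x + y)^(p+q)` and by `σ_j² ≤ c_H`, which is (BK);
this gives both estimates of `‖W‖ = ‖W*‖`. For the bias, `⟪S g, A S h - S W h⟫ = γ ⟪W* g, h⟫`
is at most `a γ^{α/2} ‖S g‖ ‖h‖`, so the component of `A S h - S W h` in the closure of the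
range of `S` has norm at most `a γ^{α/2} ‖h‖`; and `P` fixes `S W h`. -/

open MeasureTheory ContinuousLinearMap
open scoped RealInnerProductSpace ENNReal NNReal

noncomputable section

namespace Real

theorem rpow_div_two_sq {x : ℝ} (hx : 0 ≤ x) (r : ℝ) : (x ^ (r / 2)) ^ 2 = x ^ r := by
  rw [← rpow_natCast, ← rpow_mul hx]
  norm_num

theorem rpow_div_add_sq_le {x y p q : ℝ} (hx : 0 ≤ x) (hy : 0 < y) (hp : 0 ≤ p) (hq : 0 ≤ q)
    (hpq : p + q = 2) : x ^ p / (x + y) ^ 2 ≤ y ^ (-q) := by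
  have hxy : 0 < x + y := by linarith
  have key : x ^ p * y ^ q ≤ (x + y) ^ 2 :=
    calc x ^ p * y ^ q ≤ (x + y) ^ p * (x + y) ^ q := by
          gcongr
          · linarith
          · linarith
      _ = (x + y) ^ 2 := by rw [← rpow_add hxy, hpq, rpow_two]
  rw [div_le_iff₀ (by positivity), rpow_neg hy.le, inv_mul_eq_div,
    le_div_iff₀ (rpow_pos_of_pos hy q)]
  exact key

theorem rpow_one_add_div_add_sq_le_rpow_sub_one {x y α : ℝ} (hx : 0 ≤ x) (hy : 0 < y)
    (hα₀ : -1 ≤ α) (hα₁ : α ≤ 1) : x ^ (1 + α) / (x + y) ^ 2 ≤ y ^ (α - 1) := by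
  simpa only [neg_sub] using
    rpow_div_add_sq_le hx hy (p := 1 + α) (q := 1 - α) (by linarith) (by linarith) (by ring)

theorem rpow_one_add_div_add_sq_le_mul {x y α : ℝ} (hx : 0 ≤ x) (hy : 0 < y) (hα₀ : 0 ≤ α)
    (hα₂ : α ≤ 2) : x ^ (1 + α) / (x + y) ^ 2 ≤ y ^ (α - 2) * x := by
  have h := rpow_div_add_sq_le hx hy hα₀ (sub_nonneg.mpr hα₂) (by ring)
  rw [neg_sub] at h
  rw [rpow_add_of_nonneg hx zero_le_one hα₀, rpow_one, mul_div_assoc, mul_comm]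
  exact mul_le_mul_of_nonneg_right h hx

theorem rpow_one_add_div_add_sq_le_of_le {x y c α : ℝ} (hx : 0 ≤ x) (hxc : x ≤ c) (hy : 0 ≤ y)
    (hα : 1 ≤ α) : x ^ (1 + α) / (x + y) ^ 2 ≤ c ^ (α - 1) := by
  have hsplit : x ^ (1 + α) = x ^ (α - 1) * x ^ 2 := by
    rw [← rpow_two, ← rpow_add_of_nonneg hx (by linarith) zero_le_two]
    ring_nf
  have hfrac : x ^ 2 / (x + y) ^ 2 ≤ 1 :=
    div_le_one_of_le₀ (pow_le_pow_left₀ hx (by linarith) 2) (sq_nonneg _)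
  rw [hsplit, mul_div_assoc]
  calc x ^ (α - 1) * (x ^ 2 / (x + y) ^ 2) ≤ x ^ (α - 1) :=
        mul_le_of_le_one_right (rpow_nonneg hx _) hfrac
    _ ≤ c ^ (α - 1) := rpow_le_rpow hx hxc (by linarith)

end Real

theorem Submodule.orthogonal_span_range_eq_bot_of_forall_eq_tsum {𝕜 E ι : Type*} [RCLike 𝕜]
    [NormedAddCommGroup E] [InnerProductSpace 𝕜 E] {v : ι → E}
    (hv : ∀ x, x = ∑' i, inner 𝕜 (v i) x • v i) : (span 𝕜 (Set.range v))ᗮ = ⊥ := by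
  refine (Submodule.eq_bot_iff _).mpr fun x hx => ?_
  have hcoeff (i : ι) : inner 𝕜 (v i) x = 0 :=
    inner_right_of_mem_orthogonal (subset_span (Set.mem_range_self i)) hx
  rw [hv x]
  simp only [hcoeff, zero_smul, tsum_zero]

theorem ContinuousLinearMap.IsPositive.isUnit_add_smul_one {E : Type*} [NormedAddCommGroup E]
    [InnerProductSpace ℝ E] [CompleteSpace E] {C : E →L[ℝ] E} (hC : C.IsPositive) {γ : ℝ}
    (hγ : 0 < γ) : IsUnit (C + γ • 1) := by
  refine isUnit_of_forall_le_norm_inner_map _ (c := ⟨γ, hγ.le⟩) hγ fun x => ?_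
  have hCx : 0 ≤ ⟪C x, x⟫ := hC.re_inner_nonneg_left x
  calc ‖x‖ ^ 2 * γ ≤ ⟪C x, x⟫ + γ * ‖x‖ ^ 2 := by linarith
    _ = ⟪(C + γ • 1) x, x⟫ := by
        rw [add_apply, inner_add_left, smul_apply, one_apply_eq_self, real_inner_smul_left,
          real_inner_self_eq_norm_sq]
    _ ≤ ‖⟪(C + γ • 1) x, x⟫‖ := Real.le_norm_self _

theorem inner_integral_rankOne_le {X E : Type*} [MeasurableSpace X] {μ : Measure X}
    [IsProbabilityMeasure μ] [NormedAddCommGroup E] [InnerProductSpace ℝ E] [CompleteSpace E]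
    {φ : X → E} {c : ℝ} (hφ : ∀ᵐ x ∂μ, ‖φ x‖ ^ 2 ≤ c) (v : E) :
    ⟪v, (∫ x, rankOne (φ x) (φ x) ∂μ) v⟫ ≤ c * ‖v‖ ^ 2 := by
  let L : (E →L[ℝ] E) →L[ℝ] ℝ := innerSL ℝ v ∘L apply ℝ E v
  have hL (x : X) : L (rankOne (φ x) (φ x)) = ⟪φ x, v⟫ ^ 2 := by
    simp only [L, rankOne, comp_apply, apply_apply, smulRight_apply, innerSL_apply_apply,
      real_inner_smul_right, real_inner_comm v, sq]
  have hpt : ∀ᵐ x ∂μ, L (rankOne (φ x) (φ x)) ≤ c * ‖v‖ ^ 2 := by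
    filter_upwards [hφ] with x hx
    calc L (rankOne (φ x) (φ x)) = ⟪φ x, v⟫ ^ 2 := hL x
      _ ≤ (‖φ x‖ * ‖v‖) ^ 2 := by
          rw [← sq_abs]
          gcongr
          exact abs_real_inner_le_norm _ _
      _ ≤ c * ‖v‖ ^ 2 := by
          rw [mul_pow]
          gcongr
  by_cases hint : Integrable (fun x => rankOne (φ x) (φ x)) μ
  · change L (∫ x, rankOne (φ x) (φ x) ∂μ) ≤ _
    rw [← L.integral_comp_comm hint]
    calc ∫ x, L (rankOne (φ x) (φ x)) ∂μ ≤ ∫ _x, c * ‖v‖ ^ 2 ∂μ :=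
          integral_mono_ae (L.integrable_comp hint) (integrable_const _) hpt
      _ = c * ‖v‖ ^ 2 := by simp
  · obtain ⟨x, hx⟩ := hφ.exists
    rw [integral_undef hint, zero_apply, inner_zero_right]
    exact mul_nonneg ((sq_nonneg _).trans hx) (sq_nonneg _)

namespace ContinuousLinearMap

section RegularizedInverse

variable {ι H : Type*} [NormedAddCommGroup H] [InnerProductSpace ℝ H]
  {e : HilbertBasis ι ℝ H} {eig : ι → ℝ} {C : H →L[ℝ] H}

theorem IsPositive.inner_hilbertBasis_apply (hC : C.IsPositive)
    (hCe : ∀ i, C (e i) = eig i • e i) (i : ι) (x : H) : ⟪e i, C x⟫ = eig i * ⟪e i, x⟫ := by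
  rw [← hC.inner_left_eq_inner_right, hCe, real_inner_smul_left]

theorem IsPositive.eigenvalue_nonneg (hC : C.IsPositive) (hCe : ∀ i, C (e i) = eig i • e i)
    (i : ι) : 0 ≤ eig i := by
  have h := hC.re_inner_nonneg_left (e i)
  rwa [hCe, RCLike.re_to_real, real_inner_smul_left, real_inner_self_eq_norm_sq,
    e.orthonormal.1 i, one_pow, mul_one] at h

theorem IsPositive.hasSum_eigenvalue_mul_inner_sq (hC : C.IsPositive)
    (hCe : ∀ i, C (e i) = eig i • e i) (x : H) :
    HasSum (fun i => eig i * ⟪e i, x⟫ ^ 2) ⟪x, C x⟫ := by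
  refine (e.hasSum_inner_mul_inner x (C x)).congr_fun fun i => ?_
  rw [hC.inner_hilbertBasis_apply hCe, real_inner_comm]
  ring

variable [CompleteSpace H] {T W : H →L[ℝ] H} {a α γ : ℝ}

theorem adjoint_apply_add_smul (hC : IsSelfAdjoint C) (hW : (C + γ • 1) ∘L W = T) (v : H) :
    adjoint W (C v + γ • v) = adjoint T v := by
  refine ext_inner_right ℝ fun x => ?_
  rw [adjoint_inner_left, adjoint_inner_left, ← hW, comp_apply, add_apply, smul_apply,
    one_apply_eq_self, inner_add_left, inner_add_right, ← adjoint_inner_right C, hC.adjoint_eq,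
    real_inner_smul_left, real_inner_smul_right]

theorem norm_adjoint_apply_sq_le (hC : C.IsPositive) (hCe : ∀ i, C (e i) = eig i • e i)
    (hγ : 0 < γ) (hW : (C + γ • 1) ∘L W = T)
    (hRC : ∀ h, ‖adjoint T h‖ ^ 2 ≤ a ^ 2 * ∑' i, eig i ^ (1 + α) * ⟪e i, h⟫ ^ 2)
    {w : ι → ℝ} (hw : ∀ i, eig i ^ (1 + α) / (eig i + γ) ^ 2 ≤ w i)
    {g : H} {s : ℝ} (hs : HasSum (fun i => w i * ⟪e i, g⟫ ^ 2) s) :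
    ‖adjoint W g‖ ^ 2 ≤ a ^ 2 * s := by
  obtain ⟨v, rfl⟩ := (isUnit_iff_bijective.mp (hC.isUnit_add_smul_one hγ)).2 g
  have hcoeff (i : ι) : ⟪e i, (C + γ • 1) v⟫ = (eig i + γ) * ⟪e i, v⟫ := by
    rw [add_apply, smul_apply, one_apply_eq_self, inner_add_right,
      hC.inner_hilbertBasis_apply hCe, real_inner_smul_right, add_mul]
  have hterm (i : ι) : eig i ^ (1 + α) * ⟪e i, v⟫ ^ 2
      = eig i ^ (1 + α) / (eig i + γ) ^ 2 * ⟪e i, (C + γ • 1) v⟫ ^ 2 := by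
    have : eig i + γ ≠ 0 := by linarith [hC.eigenvalue_nonneg hCe i]
    rw [hcoeff]
    field_simp
  have hle (i : ι) : eig i ^ (1 + α) * ⟪e i, v⟫ ^ 2 ≤ w i * ⟪e i, (C + γ • 1) v⟫ ^ 2 := by
    rw [hterm]
    exact mul_le_mul_of_nonneg_right (hw i) (sq_nonneg _)
  have hnonneg (i : ι) : 0 ≤ eig i ^ (1 + α) * ⟪e i, v⟫ ^ 2 :=
    mul_nonneg (Real.rpow_nonneg (hC.eigenvalue_nonneg hCe i) _) (sq_nonneg _)
  have hsum := hs.summable.of_nonneg_of_le hnonneg hle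
  calc ‖adjoint W ((C + γ • 1) v)‖ ^ 2 = ‖adjoint T v‖ ^ 2 := by
        rw [add_apply, smul_apply, one_apply_eq_self, adjoint_apply_add_smul hC.isSelfAdjoint hW]
    _ ≤ a ^ 2 * s :=
        (hRC v).trans (mul_le_mul_of_nonneg_left (hasSum_le hle hsum.hasSum hs) (sq_nonneg a))

theorem norm_le_of_forall_rpow_div_le (hC : C.IsPositive) (hCe : ∀ i, C (e i) = eig i • e i)
    (hγ : 0 < γ) (hW : (C + γ • 1) ∘L W = T)
    (hRC : ∀ h, ‖adjoint T h‖ ^ 2 ≤ a ^ 2 * ∑' i, eig i ^ (1 + α) * ⟪e i, h⟫ ^ 2)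
    (ha : 0 ≤ a) {M : ℝ} (hM₀ : 0 ≤ M)
    (hM : ∀ i, eig i ^ (1 + α) / (eig i + γ) ^ 2 ≤ M ^ 2) : ‖W‖ ≤ a * M := by
  rw [← LinearIsometryEquiv.norm_map adjoint W]
  refine opNorm_le_bound _ (mul_nonneg ha hM₀) fun g => ?_
  have hs : HasSum (fun i => M ^ 2 * ⟪e i, g⟫ ^ 2) (M ^ 2 * ‖g‖ ^ 2) := by
    rw [← real_inner_self_eq_norm_sq]
    refine ((e.hasSum_inner_mul_inner g g).mul_left (M ^ 2)).congr_fun fun i => ?_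
    rw [real_inner_comm g]
    ring
  refine (pow_le_pow_iff_left₀ (norm_nonneg _) (by positivity) two_ne_zero).mp ?_
  calc ‖adjoint W g‖ ^ 2 ≤ a ^ 2 * (M ^ 2 * ‖g‖ ^ 2) :=
        norm_adjoint_apply_sq_le hC hCe hγ hW hRC hM hs
    _ = (a * M * ‖g‖) ^ 2 := by ring

theorem sq_mul_norm_adjoint_apply_le (hC : C.IsPositive) (hCe : ∀ i, C (e i) = eig i • e i)
    (hγ : 0 < γ) (hW : (C + γ • 1) ∘L W = T)
    (hRC : ∀ h, ‖adjoint T h‖ ^ 2 ≤ a ^ 2 * ∑' i, eig i ^ (1 + α) * ⟪e i, h⟫ ^ 2)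
    (hα₀ : 0 ≤ α) (hα₂ : α ≤ 2) (g : H) :
    (γ * ‖adjoint W g‖) ^ 2 ≤ a ^ 2 * γ ^ α * ⟪g, C g⟫ := by
  have hs := (hC.hasSum_eigenvalue_mul_inner_sq hCe g).mul_left (γ ^ (α - 2))
  simp only [← mul_assoc] at hs
  have hbound := norm_adjoint_apply_sq_le hC hCe hγ hW hRC
    (fun i => Real.rpow_one_add_div_add_sq_le_mul (hC.eigenvalue_nonneg hCe i) hγ hα₀ hα₂) hs
  have hγα : γ ^ 2 * γ ^ (α - 2) = γ ^ α := by
    rw [← Real.rpow_two, ← Real.rpow_add hγ]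
    ring_nf
  calc (γ * ‖adjoint W g‖) ^ 2 = γ ^ 2 * ‖adjoint W g‖ ^ 2 := mul_pow _ _ _
    _ ≤ γ ^ 2 * (a ^ 2 * (γ ^ (α - 2) * ⟪g, C g⟫)) := by gcongr
    _ = a ^ 2 * γ ^ α * ⟪g, C g⟫ := by rw [← hγα]; ring

end RegularizedInverse

section Bias

variable {E : Type*} [NormedAddCommGroup E] [InnerProductSpace ℝ E] [CompleteSpace E]

theorem norm_apply_le_of_forall_inner_le {P : E →L[ℝ] E} (hPsa : IsSelfAdjoint P)
    (hPidem : P ∘L P = P) {K : Submodule ℝ E}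
    (hPK : LinearMap.range (P : E →ₗ[ℝ] E) = K.topologicalClosure) {u : E} {c : ℝ}
    (hc : 0 ≤ c) (hK : ∀ z ∈ K, ⟪z, u⟫ ≤ c * ‖z‖) : ‖P u‖ ≤ c := by
  have hclosure : ∀ z ∈ K.topologicalClosure, ⟪z, u⟫ ≤ c * ‖z‖ := by
    intro z hz
    rw [← SetLike.mem_coe, K.topologicalClosure_coe] at hz
    exact closure_minimal (t := {z | ⟪z, u⟫ ≤ c * ‖z‖}) hK
      (isClosed_le (by fun_prop) (by fun_prop)) hz
  have hPu : ‖P u‖ ^ 2 = ⟪P u, u⟫ := by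
    rw [← real_inner_self_eq_norm_sq, ← adjoint_inner_left P, hPsa.adjoint_eq, ← comp_apply,
      hPidem]
  have h := hclosure (P u) (hPK ▸ LinearMap.mem_range_self _ u)
  nlinarith [norm_nonneg (P u)]

variable {H : Type*} [NormedAddCommGroup H] [InnerProductSpace ℝ H] [CompleteSpace H]
  {S : H →L[ℝ] E} {A : E →L[ℝ] E} {T W : H →L[ℝ] H} {γ : ℝ}

theorem inner_apply_sub_apply_eq (hW : (adjoint S ∘L S + γ • 1) ∘L W = adjoint S ∘L (A ∘L S))
    (g h : H) : ⟪S g, A (S h) - S (W h)⟫ = γ * ⟪adjoint W g, h⟫ := by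
  have hWh := congr($hW h)
  simp only [comp_apply, add_apply, smul_apply, one_apply_eq_self] at hWh
  rw [inner_sub_right, ← adjoint_inner_right S, ← adjoint_inner_right S, ← hWh,
    adjoint_inner_left, inner_add_right, real_inner_smul_right]
  ring

theorem mul_norm_adjoint_apply_le {ι : Type*} {e : HilbertBasis ι ℝ H} {eig : ι → ℝ}
    (hCe : ∀ i, (adjoint S ∘L S) (e i) = eig i • e i) (hγ : 0 < γ)
    (hW : (adjoint S ∘L S + γ • 1) ∘L W = T) {a α : ℝ}
    (hRC : ∀ h, ‖adjoint T h‖ ^ 2 ≤ a ^ 2 * ∑' i, eig i ^ (1 + α) * ⟪e i, h⟫ ^ 2)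
    (ha : 0 ≤ a) (hα₀ : 0 ≤ α) (hα₂ : α ≤ 2) (g : H) :
    γ * ‖adjoint W g‖ ≤ a * γ ^ (α / 2) * ‖S g‖ := by
  have h := sq_mul_norm_adjoint_apply_le (isPositive_adjoint_comp_self S) hCe hγ hW hRC hα₀ hα₂ g
  rw [← RCLike.re_to_real (x := ⟪g, _⟫), ← apply_norm_sq_eq_inner_adjoint_right] at h
  refine (pow_le_pow_iff_left₀ (by positivity) (by positivity) two_ne_zero).mp ?_
  calc (γ * ‖adjoint W g‖) ^ 2 ≤ a ^ 2 * γ ^ α * ‖S g‖ ^ 2 := h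
    _ = (a * γ ^ (α / 2) * ‖S g‖) ^ 2 := by rw [mul_pow, mul_pow, Real.rpow_div_two_sq hγ.le]

theorem norm_comp_sub_comp_le {P : E →L[ℝ] E} (hPsa : IsSelfAdjoint P) (hPidem : P ∘L P = P)
    (hPS : LinearMap.range (P : E →ₗ[ℝ] E) = (LinearMap.range (S : H →ₗ[ℝ] E)).topologicalClosure)
    (hγ : 0 ≤ γ) (hW : (adjoint S ∘L S + γ • 1) ∘L W = adjoint S ∘L (A ∘L S)) {c : ℝ}
    (hc : 0 ≤ c) (hWS : ∀ g, γ * ‖adjoint W g‖ ≤ c * ‖S g‖) :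
    ‖A ∘L S - S ∘L W‖ ≤ c + ‖A ∘L S - P ∘L (A ∘L S)‖ := by
  refine opNorm_le_bound _ (by positivity) fun h => ?_
  have hPSW : P (S (W h)) = S (W h) := by
    obtain ⟨y, hy⟩ : S (W h) ∈ LinearMap.range (P : E →ₗ[ℝ] E) :=
      hPS ▸ Submodule.le_topologicalClosure _ (LinearMap.mem_range_self _ (W h))
    rw [← hy]
    exact congr($hPidem y)
  have hsplit : (A ∘L S - S ∘L W) h
      = (A ∘L S - P ∘L (A ∘L S)) h + P (A (S h) - S (W h)) := by
    simp only [sub_apply, comp_apply, map_sub, hPSW]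
    abel
  have hPu : ‖P (A (S h) - S (W h))‖ ≤ c * ‖h‖ := by
    refine norm_apply_le_of_forall_inner_le hPsa hPidem hPS (by positivity) ?_
    rintro _ ⟨g, rfl⟩
    calc ⟪S g, A (S h) - S (W h)⟫ = γ * ⟪adjoint W g, h⟫ := inner_apply_sub_apply_eq hW g h
      _ ≤ γ * ‖adjoint W g‖ * ‖h‖ := by
          rw [mul_assoc]
          exact mul_le_mul_of_nonneg_left (real_inner_le_norm _ _) hγ
      _ ≤ c * ‖S g‖ * ‖h‖ := mul_le_mul_of_nonneg_right (hWS g) (norm_nonneg h)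
      _ = c * ‖h‖ * ‖S g‖ := by ring
  calc ‖(A ∘L S - S ∘L W) h‖
      ≤ ‖(A ∘L S - P ∘L (A ∘L S)) h‖ + ‖P (A (S h) - S (W h))‖ := hsplit ▸ norm_add_le _ _
    _ ≤ ‖A ∘L S - P ∘L (A ∘L S)‖ * ‖h‖ + c * ‖h‖ := add_le_add (le_opNorm _ _) hPu
    _ = (c + ‖A ∘L S - P ∘L (A ∘L S)‖) * ‖h‖ := by ring

end Bias

end ContinuousLinearMap

theorem regularization_bias_bound_general
    {X : Type*} [MeasurableSpace X] (π : Measure X) [IsProbabilityMeasure π]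
    {H : Type*} [NormedAddCommGroup H] [InnerProductSpace ℝ H] [CompleteSpace H]
    -- the Koopman operator: compact and self-adjoint on L²_π(X)
    (A : Lp ℝ 2 π →L[ℝ] Lp ℝ 2 π)
    -- the injection S : H → L²_π(X)
    (S : H →L[ℝ] Lp ℝ 2 π)
    -- covariance and cross-covariance operators
    (C T : H →L[ℝ] H) (hCdef : C = adjoint S ∘L S) (hTdef : T = adjoint S ∘L (A ∘L S))
    -- the feature map, with C = ∫ φ(x) ⊗ φ(x) dπ(x)
    (φ : X → H) (hCint : C = ∫ x, rankOne (φ x) (φ x) ∂π)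
    -- (BK) boundedness
    (cH : ℝ) (hBK : ∀ᵐ x ∂π, ‖φ x‖ ^ 2 ≤ cH)
    -- a singular value decomposition (sigs j, ℓv j, hv j) of S
    (sigs : ℕ → ℝ) (ℓv : ℕ → Lp ℝ 2 π) (hv : ℕ → H)
    (hONh : Orthonormal ℝ hv)
    (hsvd : ∀ j, S (hv j) = sigs j • ℓv j)
    (hsvd' : ∀ j, adjoint S (ℓv j) = sigs j • hv j)
    (hcomplete : ∀ h : H, h = ∑' j, ⟪hv j, h⟫ • hv j)
    -- regularity parameters
    (α : ℝ) (hα : α ∈ Set.Ioc (0 : ℝ) 2)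
    -- (RC) regularity: T T* ⪯ a² C^{1+α}
    (a : ℝ) (ha : 0 < a)
    (hRC : ∀ h : H, ‖adjoint T h‖ ^ 2 ≤ a ^ 2 * ∑' j, (sigs j ^ 2) ^ (1 + α) * ⟪hv j, h⟫ ^ 2)
    -- the regularized population estimator W_γ = C_γ^{-1} T
    (γ : ℝ) (hγ : 0 < γ) (W : H →L[ℝ] H) (hW : (C + γ • 1) ∘L W = T)
    -- P is the orthogonal projection onto the closure of range S
    (P : Lp ℝ 2 π →L[ℝ] Lp ℝ 2 π) (hPsa : IsSelfAdjoint P) (hPidem : P ∘L P = P)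
    (hPrange : LinearMap.range (P : Lp ℝ 2 π →ₗ[ℝ] Lp ℝ 2 π) =
      (LinearMap.range (S : H →ₗ[ℝ] Lp ℝ 2 π)).topologicalClosure) :
    (1 ≤ α → ‖W‖ ≤ a * cH ^ ((α - 1) / 2)) ∧
    (α ≤ 1 → ‖W‖ ≤ a * γ ^ ((α - 1) / 2)) ∧
    ‖A ∘L S - S ∘L W‖ ≤ a * γ ^ (α / 2) + ‖A ∘L S - P ∘L (A ∘L S)‖ := by
  obtain ⟨hα₀, hα₂⟩ := hα
  subst hCdef hTdef
  let e := HilbertBasis.mkOfOrthogonalEqBot hONh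
    (Submodule.orthogonal_span_range_eq_bot_of_forall_eq_tsum hcomplete)
  have he : ⇑e = hv := HilbertBasis.coe_mkOfOrthogonalEqBot _ _
  have hC := isPositive_adjoint_comp_self S
  have hCe (j : ℕ) : (adjoint S ∘L S) (e j) = sigs j ^ 2 • e j := by
    rw [he, comp_apply, hsvd, map_smul, hsvd', smul_smul, sq]
  rw [← he] at hRC
  have hsig (j : ℕ) : sigs j ^ 2 ≤ cH := by
    have h := inner_integral_rankOne_le hBK (e j)
    rwa [← hCint, hC.inner_hilbertBasis_apply hCe, real_inner_self_eq_norm_sq,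
      e.orthonormal.1 j, one_pow, mul_one, mul_one] at h
  have hcH : 0 ≤ cH := (sq_nonneg _).trans (hsig 0)
  refine ⟨fun hα₁ => ?_, fun hα₁ => ?_, ?_⟩
  · refine norm_le_of_forall_rpow_div_le hC hCe hγ hW hRC ha.le (Real.rpow_nonneg hcH _)
      fun j => ?_
    rw [Real.rpow_div_two_sq hcH]
    exact Real.rpow_one_add_div_add_sq_le_of_le (sq_nonneg _) (hsig j) hγ.le hα₁
  · refine norm_le_of_forall_rpow_div_le hC hCe hγ hW hRC ha.le (Real.rpow_nonneg hγ.le _)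
      fun j => ?_
    rw [Real.rpow_div_two_sq hγ.le]
    exact Real.rpow_one_add_div_add_sq_le_rpow_sub_one (sq_nonneg _) hγ (by linarith) hα₁
  · exact norm_comp_sub_comp_le hPsa hPidem hPrange hγ.le hW (by positivity)
      (mul_norm_adjoint_apply_le hCe hγ hW hRC ha.le hα₀.le hα₂)

/-- Regularization bias of the Tikhonov-regularized population
estimator `W_γ = C_γ^{-1} T`: under (BK), (SD) and (RC) with parameter `α`,
`‖W_γ‖ ≤ a c_H^{(α-1)/2}` when `α ∈ [1,2]`, `‖W_γ‖ ≤ a γ^{(α-1)/2}` when `α ∈ (0,1]`,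
and `‖A S - S W_γ‖ ≤ a γ^{α/2} + ‖(I - P_H) A S‖`, where `P_H` is the orthogonal
projection of `L²_π(X)` onto the closure of `range S`. -/
theorem regularization_bias_bound
    {X : Type*} [MeasurableSpace X] (π : Measure X) [IsProbabilityMeasure π]
    {H : Type*} [NormedAddCommGroup H] [InnerProductSpace ℝ H] [CompleteSpace H]
    [TopologicalSpace.SeparableSpace H]
    -- the Koopman operator: compact and self-adjoint on L²_π(X)
    (A : Lp ℝ 2 π →L[ℝ] Lp ℝ 2 π)
    (hAc : IsCompactOperator (A : Lp ℝ 2 π → Lp ℝ 2 π)) (hAsa : IsSelfAdjoint A)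
    -- the injection S : H → L²_π(X)
    (S : H →L[ℝ] Lp ℝ 2 π) (hSinj : Function.Injective S)
    -- covariance and cross-covariance operators
    (C T : H →L[ℝ] H) (hCdef : C = adjoint S ∘L S) (hTdef : T = adjoint S ∘L (A ∘L S))
    -- the feature map, with C = ∫ φ(x) ⊗ φ(x) dπ(x)
    (φ : X → H) (hCint : C = ∫ x, rankOne (φ x) (φ x) ∂π)
    -- (BK) boundedness
    (cH : ℝ) (hBK : ∀ᵐ x ∂π, ‖φ x‖ ^ 2 ≤ cH)
    -- a singular value decomposition (sigs j, ℓv j, hv j) of S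
    (sigs : ℕ → ℝ) (ℓv : ℕ → Lp ℝ 2 π) (hv : ℕ → H)
    (hONl : Orthonormal ℝ ℓv) (hONh : Orthonormal ℝ hv)
    (hsvd : ∀ j, S (hv j) = sigs j • ℓv j)
    (hsvd' : ∀ j, adjoint S (ℓv j) = sigs j • hv j)
    (hsig0 : ∀ j, 0 ≤ sigs j) (hanti : Antitone sigs)
    (hcomplete : ∀ h : H, h = ∑' j, ⟪hv j, h⟫ • hv j)
    -- regularity parameters
    (α β : ℝ) (hα : α ∈ Set.Ioc (0 : ℝ) 2) (hβ : β ∈ Set.Ioc (0 : ℝ) 1)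
    -- (SD) spectral decay
    (b : ℝ) (hb : 0 < b) (hSD : ∀ j : ℕ, sigs j ^ 2 ≤ b * ((j : ℝ) + 1) ^ (-(1 / β)))
    -- (RC) regularity: T T* ⪯ a² C^{1+α}
    (a : ℝ) (ha : 0 < a)
    (hRC : ∀ h : H, ‖adjoint T h‖ ^ 2 ≤ a ^ 2 * ∑' j, (sigs j ^ 2) ^ (1 + α) * ⟪hv j, h⟫ ^ 2)
    -- the regularized population estimator W_γ = C_γ^{-1} T
    (γ : ℝ) (hγ : 0 < γ) (W : H →L[ℝ] H) (hW : (C + γ • 1) ∘L W = T)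
    -- P is the orthogonal projection onto the closure of range S
    (P : Lp ℝ 2 π →L[ℝ] Lp ℝ 2 π) (hPsa : IsSelfAdjoint P) (hPidem : P ∘L P = P)
    (hPrange : LinearMap.range (P : Lp ℝ 2 π →ₗ[ℝ] Lp ℝ 2 π) =
      (LinearMap.range (S : H →ₗ[ℝ] Lp ℝ 2 π)).topologicalClosure) :
    (1 ≤ α → ‖W‖ ≤ a * cH ^ ((α - 1) / 2)) ∧
    (α ≤ 1 → ‖W‖ ≤ a * γ ^ ((α - 1) / 2)) ∧
    ‖A ∘L S - S ∘L W‖ ≤ a * γ ^ (α / 2) + ‖A ∘L S - P ∘L (A ∘L S)‖ :=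
  regularization_bias_bound_general π A S C T hCdef hTdef φ hCint cH hBK sigs ℓv hv hONh hsvd hsvd'
    hcomplete α hα a ha hRC γ hγ W hW P hPsa hPidem hPrange
end
end
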